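/- Let 𝒥 and 𝒦 be nonempty finite sets, let P be a probability distribution on 𝒥, and let σ(j,k), for j ∈ 𝒥 and k ∈ 𝒦, be density operators on ℂ^D. Then (1/|𝒦|) ∑_{k∈𝒦} [ S( ∑_{j} P(j) σ(j,k) ) − ∑_{j} P(j) S(σ(j,k)) ] − [ S( (1/|𝒦|) ∑_{j,k} P(j) σ(j,k) ) − ∑_{j} P(j) S( (1/|𝒦|) ∑_{k} σ(j,k) ) ] ≤ log₂ |𝒦|. In other words, the average over the key k of the Holevo quantities of the individual ensembles exceeds the Holevo quantity of the key-averaged ensemble by at most log₂|𝒦|. -/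

import Mathlib

open scoped BigOperators
open Classical
open scoped ComplexOrder

noncomputable section

/-- A density operator: positive semidefinite with unit trace. -/
def IsDensityOperator {D : ℕ} (ρ : Matrix (Fin D) (Fin D) ℂ) : Prop :=
  ρ.PosSemidef ∧ ρ.trace = 1

/-- Von Neumann entropy (base 2) of a matrix: `S(ρ) = −∑ λᵢ log₂ λᵢ` over the eigenvalues
of `ρ` when `ρ` is Hermitian (with `0 log₂ 0 = 0`), and `0` otherwise. -/
def vNEntropy {m : Type*} [Fintype m] [DecidableEq m] (ρ : Matrix m m ℂ) : ℝ :=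
  if h : ρ.IsHermitian then -∑ i, h.eigenvalues i * Real.logb 2 (h.eigenvalues i) else 0

/-!
With `ρₖ = ∑ⱼ P(j) σ(j,k)`, `ρ̄ = |𝒦|⁻¹ ∑ₖ ρₖ` and `σ̄ⱼ = |𝒦|⁻¹ ∑ₖ σ(j,k)`, the left-hand side is
`(|𝒦|⁻¹ ∑ₖ S(ρₖ) - S(ρ̄)) + ∑ⱼ P(j) (S(σ̄ⱼ) - |𝒦|⁻¹ ∑ₖ S(σ(j,k)))`.
The first bracket is `≤ 0` by concavity of `S`; each `S(σ̄ⱼ) - |𝒦|⁻¹ ∑ₖ S(σ(j,k))` is at most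
`log₂ |𝒦|`, the Shannon entropy of the uniform mixing weights. Both entropy inequalities are
majorisation statements: in a suitable orthonormal basis one spectrum is obtained from the other
by a substochastic matrix, and Jensen's inequality for `t ↦ -t log t` concludes.
-/

namespace Real

theorem sum_mul_negMulLog_le_negMulLog_sum {ι : Type*} [Fintype ι] {t x : ι → ℝ}
    (ht : ∀ i, 0 ≤ t i) (ht1 : ∑ i, t i ≤ 1) (hx : ∀ i, 0 ≤ x i) :
    ∑ i, t i * negMulLog (x i) ≤ negMulLog (∑ i, t i * x i) := by
  -- put the missing weight `1 - ∑ t` on the point `0`, where `negMulLog` vanishes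
  simpa using concaveOn_negMulLog.map_add_sum_le (t := Finset.univ) (w := t) (p := x)
    (v := 1 - ∑ i, t i) (q := 0) (fun i _ => ht i) (by ring) (fun i _ => hx i)
    (by linarith) (Set.mem_Ici.2 le_rfl)

theorem sum_negMulLog_le_of_substochastic {ι κ : Type*} [Fintype ι] [Fintype κ]
    {w : ι → κ → ℝ} {μ : κ → ℝ} (hw : ∀ i k, 0 ≤ w i k) (hμ : ∀ k, 0 ≤ μ k)
    (hrow : ∀ i, ∑ k, w i k ≤ 1) (hcol : ∀ k, μ k ≠ 0 → ∑ i, w i k = 1) :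
    ∑ k, negMulLog (μ k) ≤ ∑ i, negMulLog (∑ k, μ k * w i k) :=
  calc ∑ k, negMulLog (μ k) = ∑ k, (∑ i, w i k) * negMulLog (μ k) := by
        refine Finset.sum_congr rfl fun k _ => ?_
        by_cases h : μ k = 0
        · simp [h]
        · rw [hcol k h, one_mul]
    _ = ∑ i, ∑ k, w i k * negMulLog (μ k) := by
        simp_rw [Finset.sum_mul]
        exact Finset.sum_comm
    _ ≤ _ := Finset.sum_le_sum fun i _ => by
        simpa only [mul_comm (μ _)] using sum_mul_negMulLog_le_negMulLog_sum (hw i) (hrow i) hμ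

theorem sum_sum_negMulLog_mul_eq {ι κ : Type*} [Fintype ι] [Fintype κ] (p : κ → ℝ)
    {q : κ → ι → ℝ} (hq : ∀ k, ∑ i, q k i = 1) :
    ∑ k, ∑ i, negMulLog (p k * q k i) =
      ∑ k, negMulLog (p k) + ∑ k, p k * ∑ i, negMulLog (q k i) := by
  simp_rw [negMulLog_mul, Finset.sum_add_distrib, ← Finset.sum_mul, ← Finset.mul_sum, hq, one_mul]

end Real

section InnerProductSpace

open RCLike InnerProductSpace

variable {𝕜 E ι : Type*} [RCLike 𝕜] [NormedAddCommGroup E] [InnerProductSpace 𝕜 E] [Fintype ι]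

theorem inner_mul_inner_symm (x y : E) : ⟪x, y⟫_𝕜 * ⟪y, x⟫_𝕜 = (‖⟪y, x⟫_𝕜‖ ^ 2 : ℝ) := by
  rw [← inner_conj_symm x y, RCLike.conj_mul, RCLike.ofReal_pow]

theorem LinearMap.IsSymmetric.re_inner_apply_self_eq_sum {T : E →ₗ[𝕜] E} (hT : T.IsSymmetric)
    (b : OrthonormalBasis ι 𝕜 E) {μ : ι → ℝ} (hb : ∀ i, T (b i) = (μ i : 𝕜) • b i) (x : E) :
    re ⟪x, T x⟫_𝕜 = ∑ i, μ i * ‖⟪b i, x⟫_𝕜‖ ^ 2 := by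
  rw [← b.sum_inner_mul_inner x (T x), map_sum]
  refine Finset.sum_congr rfl fun i _ => ?_
  rw [← hT, hb, inner_smul_left, conj_ofReal, mul_left_comm, inner_mul_inner_symm,
    ← ofReal_mul, ofReal_re]

namespace OrthonormalBasis

variable (b : OrthonormalBasis ι 𝕜 E)

theorem sum_mul_norm_inner_sq_self (μ : ι → ℝ) (i : ι) :
    ∑ m, μ m * ‖⟪b m, b i⟫_𝕜‖ ^ 2 = μ i := by
  rw [Finset.sum_eq_single i (fun m _ hm => by simp [b.inner_eq_ite, hm]) (by simp)]
  simp

theorem sum_negMulLog_le_sum_negMulLog_diag {κ : Type*} [Fintype κ]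
    (f : OrthonormalBasis κ 𝕜 E) {μ : ι → ℝ} (hμ : ∀ i, 0 ≤ μ i) :
    ∑ i, Real.negMulLog (μ i) ≤ ∑ k, Real.negMulLog (∑ i, μ i * ‖⟪b i, f k⟫_𝕜‖ ^ 2) := by
  refine Real.sum_negMulLog_le_of_substochastic (fun _ _ => by positivity) hμ
    (fun k => (b.sum_sq_norm_inner_right (f k)).trans_le ?_) (fun i _ => ?_)
  · simp
  · simp_rw [norm_inner_symm (b i)]
    simp [f.sum_sq_norm_inner_right (b i)]

variable {α : Type*} [Fintype α] {μ : ι → ℝ} {r : α → ℝ} {v : α → E}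

theorem mul_sum_norm_inner_sq_div_le_one (hr : ∀ a, 0 ≤ r a)
    (h : ∀ x, ∑ i, μ i * ‖⟪b i, x⟫_𝕜‖ ^ 2 = ∑ a, r a * ‖⟪v a, x⟫_𝕜‖ ^ 2) (a : α) :
    r a * ∑ i, ‖⟪b i, v a⟫_𝕜‖ ^ 2 / μ i ≤ 1 := by
  set s := ∑ i, ‖⟪b i, v a⟫_𝕜‖ ^ 2 / μ i
  have hμ : ∀ i, 0 ≤ μ i := fun i => by
    rw [← b.sum_mul_norm_inner_sq_self μ i, h]
    exact Finset.sum_nonneg fun a _ => mul_nonneg (hr a) (sq_nonneg _)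
  have hs : 0 ≤ s := Finset.sum_nonneg fun i _ => div_nonneg (sq_nonneg _) (hμ i)
  -- test the identity on `z = ∑ i, (⟪b i, v a⟫ / μ i) • b i`, for which both sides equal `s`
  set z := b.repr.symm (WithLp.toLp 2 fun i => ⟪b i, v a⟫_𝕜 / μ i)
  have hz : ∀ i, ⟪b i, z⟫_𝕜 = ⟪b i, v a⟫_𝕜 / μ i := fun i => by
    rw [← b.repr_apply_apply, LinearIsometryEquiv.apply_symm_apply]
  have hleft : ∑ i, μ i * ‖⟪b i, z⟫_𝕜‖ ^ 2 = s := by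
    refine Finset.sum_congr rfl fun i _ => ?_
    rw [hz, norm_div, RCLike.norm_ofReal, abs_of_nonneg (hμ i)]
    rcases (hμ i).eq_or_lt with hi | hi
    · simp [← hi]
    · field_simp
  have hright : ⟪v a, z⟫_𝕜 = s := by
    rw [← b.sum_inner_mul_inner, RCLike.ofReal_sum]
    refine Finset.sum_congr rfl fun i _ => ?_
    rw [hz, mul_div_assoc', inner_mul_inner_symm, RCLike.ofReal_div]
  have hsq : r a * s ^ 2 ≤ s :=
    calc r a * s ^ 2 = r a * ‖⟪v a, z⟫_𝕜‖ ^ 2 := by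
          rw [hright, RCLike.norm_ofReal, abs_of_nonneg hs]
      _ ≤ ∑ a, r a * ‖⟪v a, z⟫_𝕜‖ ^ 2 :=
          Finset.single_le_sum (f := fun a => r a * ‖⟪v a, z⟫_𝕜‖ ^ 2)
            (fun a _ => mul_nonneg (hr a) (sq_nonneg _)) (Finset.mem_univ a)
      _ = s := by rw [← h, hleft]
  rcases hs.eq_or_lt with hs0 | hs0
  · simp [← hs0]
  · nlinarith

/-- The hypothesis says `∑ i, μ i • |b i⟩⟨b i| = ∑ a, r a • |v a⟩⟨v a|`: the entropy of an
ensemble of pure states is at most the Shannon entropy of its weights. -/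
theorem sum_negMulLog_le_of_sum_mul_norm_inner_sq_eq (hr : ∀ a, 0 ≤ r a) (hv : ∀ a, ‖v a‖ = 1)
    (h : ∀ x, ∑ i, μ i * ‖⟪b i, x⟫_𝕜‖ ^ 2 = ∑ a, r a * ‖⟪v a, x⟫_𝕜‖ ^ 2) :
    ∑ i, Real.negMulLog (μ i) ≤ ∑ a, Real.negMulLog (r a) := by
  have hμ : ∀ i, μ i = ∑ a, r a * ‖⟪b i, v a⟫_𝕜‖ ^ 2 := fun i => by
    simp_rw [← b.sum_mul_norm_inner_sq_self μ i, h, norm_inner_symm (b i)]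
  have hμ0 : ∀ i, 0 ≤ μ i := fun i =>
    (hμ i).symm ▸ Finset.sum_nonneg fun a _ => mul_nonneg (hr a) (sq_nonneg _)
  have hweight : ∀ a i, μ i * (r a * ‖⟪b i, v a⟫_𝕜‖ ^ 2 / μ i) = r a * ‖⟪b i, v a⟫_𝕜‖ ^ 2 := by
    intro a i
    rcases eq_or_ne (μ i) 0 with hi | hi
    · rw [hi, zero_mul, eq_comm]
      exact (Finset.sum_eq_zero_iff_of_nonneg fun a _ => mul_nonneg (hr a) (sq_nonneg _)).1
        ((hμ i).symm.trans hi) a (Finset.mem_univ a)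
    · exact mul_div_cancel₀ _ hi
  have key := Real.sum_negMulLog_le_of_substochastic
    (w := fun a i => r a * ‖⟪b i, v a⟫_𝕜‖ ^ 2 / μ i)
    (fun a i => div_nonneg (mul_nonneg (hr a) (sq_nonneg _)) (hμ0 i)) hμ0
    (fun a => by simpa only [mul_div_assoc, Finset.mul_sum]
      using b.mul_sum_norm_inner_sq_div_le_one hr h a)
    (fun i hi => by rw [← Finset.sum_div, ← hμ i, div_self hi])
  refine key.trans_eq (Finset.sum_congr rfl fun a _ => ?_)
  simp only [hweight, ← Finset.mul_sum, b.sum_sq_norm_inner_right, hv, one_pow, mul_one]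

end OrthonormalBasis

end InnerProductSpace

namespace Matrix

open RCLike InnerProductSpace

variable {𝕜 n κ : Type*} [RCLike 𝕜] [Fintype n] [DecidableEq n] [Fintype κ]

theorem IsHermitian.toEuclideanLin_eigenvectorBasis {A : Matrix n n 𝕜} (hA : A.IsHermitian)
    (i : n) :
    toEuclideanLin A (hA.eigenvectorBasis i) = (hA.eigenvalues i : 𝕜) • hA.eigenvectorBasis i := by
  ext1
  rw [toLpLin_apply]
  simp only [hA.mulVec_eigenvectorBasis, WithLp.ofLp_smul, RCLike.real_smul_eq_coe_smul (K := 𝕜)]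

theorem IsHermitian.re_inner_toEuclideanLin_self {A : Matrix n n 𝕜} (hA : A.IsHermitian)
    (x : EuclideanSpace 𝕜 n) :
    re ⟪x, toEuclideanLin A x⟫_𝕜 = ∑ i, hA.eigenvalues i * ‖⟪hA.eigenvectorBasis i, x⟫_𝕜‖ ^ 2 :=
  (isSymmetric_toEuclideanLin_iff.2 hA).re_inner_apply_self_eq_sum hA.eigenvectorBasis
    hA.toEuclideanLin_eigenvectorBasis x

theorem IsHermitian.sum_eigenvalues_eq_one {A : Matrix n n 𝕜} (hA : A.IsHermitian)
    (htr : A.trace = 1) : ∑ i, hA.eigenvalues i = 1 := by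
  exact_mod_cast hA.trace_eq_sum_eigenvalues.symm.trans htr

theorem posSemidef_sum_smul {m : Type*} {c : κ → ℝ} (hc : ∀ k, 0 ≤ c k)
    {A : κ → Matrix m m ℂ} (hA : ∀ k, (A k).PosSemidef) : (∑ k, (c k : ℂ) • A k).PosSemidef :=
  posSemidef_sum _ fun k _ => (hA k).smul (Complex.zero_le_real.2 (hc k))

theorem re_inner_toEuclideanLin_sum_smul (c : κ → ℝ) (A : κ → Matrix n n ℂ)
    (x : EuclideanSpace ℂ n) :
    re ⟪x, toEuclideanLin (∑ k, (c k : ℂ) • A k) x⟫_ℂ =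
      ∑ k, c k * re ⟪x, toEuclideanLin (A k) x⟫_ℂ := by
  simp only [map_sum, map_smul, LinearMap.sum_apply, LinearMap.smul_apply, inner_sum,
    inner_smul_right, RCLike.re_to_complex, Complex.re_ofReal_mul]

end Matrix

section Entropy

open Real Matrix RCLike InnerProductSpace

variable {n κ : Type*} [Fintype n] [DecidableEq n] [Fintype κ]

theorem vNEntropy_eq_sum_negMulLog {A : Matrix n n ℂ} (hA : A.IsHermitian) :
    vNEntropy A = (∑ i, negMulLog (hA.eigenvalues i)) / log 2 := by
  rw [vNEntropy, dif_pos hA, Finset.sum_div, ← Finset.sum_neg_distrib]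
  refine Finset.sum_congr rfl fun i _ => ?_
  rw [logb, negMulLog]
  ring

theorem sum_mul_vNEntropy_le_vNEntropy_sum {c : κ → ℝ} (hc : ∀ k, 0 ≤ c k) (hc1 : ∑ k, c k ≤ 1)
    {ρ : κ → Matrix n n ℂ} (hρ : ∀ k, (ρ k).PosSemidef) :
    ∑ k, c k * vNEntropy (ρ k) ≤ vNEntropy (∑ k, (c k : ℂ) • ρ k) := by
  have hmix := (posSemidef_sum_smul hc hρ).isHermitian
  set f := hmix.eigenvectorBasis
  set μ := hmix.eigenvalues
  set d : κ → n → ℝ := fun k i => re ⟪f i, toEuclideanLin (ρ k) (f i)⟫_ℂ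
  have hd : ∀ k i, d k i = ∑ m, (hρ k).isHermitian.eigenvalues m *
      ‖⟪(hρ k).isHermitian.eigenvectorBasis m, f i⟫_ℂ‖ ^ 2 := fun k i =>
    (hρ k).isHermitian.re_inner_toEuclideanLin_self (f i)
  have hd0 : ∀ k i, 0 ≤ d k i := fun k i => (hd k i).symm ▸
    Finset.sum_nonneg fun m _ => mul_nonneg ((hρ k).eigenvalues_nonneg m) (sq_nonneg _)
  have hdμ : ∀ i, ∑ k, c k * d k i = μ i := fun i => by
    rw [← re_inner_toEuclideanLin_sum_smul, hmix.re_inner_toEuclideanLin_self,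
      f.sum_mul_norm_inner_sq_self]
  have key : ∑ k, c k * ∑ m, negMulLog ((hρ k).isHermitian.eigenvalues m) ≤
      ∑ i, negMulLog (μ i) :=
    calc _ ≤ ∑ k, c k * ∑ i, negMulLog (d k i) := by
          refine Finset.sum_le_sum fun k _ => mul_le_mul_of_nonneg_left ?_ (hc k)
          rw [funext (hd k)]
          exact (hρ k).isHermitian.eigenvectorBasis.sum_negMulLog_le_sum_negMulLog_diag f
            (hρ k).eigenvalues_nonneg
      _ = ∑ i, ∑ k, c k * negMulLog (d k i) := by
          simp_rw [Finset.mul_sum]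
          exact Finset.sum_comm
      _ ≤ ∑ i, negMulLog (μ i) := by
          gcongr with i
          rw [← hdμ i]
          exact sum_mul_negMulLog_le_negMulLog_sum hc hc1 fun k => hd0 k i
  rw [vNEntropy_eq_sum_negMulLog hmix]
  simp_rw [vNEntropy_eq_sum_negMulLog (hρ _).isHermitian, mul_div_assoc', ← Finset.sum_div]
  exact div_le_div_of_nonneg_right key (log_nonneg one_le_two)

theorem vNEntropy_sum_smul_le {p : κ → ℝ} (hp : ∀ k, 0 ≤ p k) {τ : κ → Matrix n n ℂ}
    (hτ : ∀ k, (τ k).PosSemidef) (htr : ∀ k, (τ k).trace = 1) :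
    vNEntropy (∑ k, (p k : ℂ) • τ k) ≤
      (∑ k, negMulLog (p k)) / log 2 + ∑ k, p k * vNEntropy (τ k) := by
  have hmix := (posSemidef_sum_smul hp hτ).isHermitian
  have hτh : ∀ k, (τ k).IsHermitian := fun k => (hτ k).isHermitian
  -- the mixture is the ensemble of the eigenvectors of all the `τ k`, with weights `p k * λ`
  have hquad : ∀ x, ∑ i, hmix.eigenvalues i * ‖⟪hmix.eigenvectorBasis i, x⟫_ℂ‖ ^ 2 =
      ∑ a : κ × n, p a.1 * (hτh a.1).eigenvalues a.2 *
        ‖⟪(hτh a.1).eigenvectorBasis a.2, x⟫_ℂ‖ ^ 2 := fun x =>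
    calc _ = re ⟪x, toEuclideanLin (∑ k, (p k : ℂ) • τ k) x⟫_ℂ :=
          (hmix.re_inner_toEuclideanLin_self x).symm
      _ = _ := by
          rw [re_inner_toEuclideanLin_sum_smul, Fintype.sum_prod_type]
          simp_rw [(hτh _).re_inner_toEuclideanLin_self, Finset.mul_sum, mul_assoc]
  have key := hmix.eigenvectorBasis.sum_negMulLog_le_of_sum_mul_norm_inner_sq_eq
    (r := fun a : κ × n => p a.1 * (hτh a.1).eigenvalues a.2)
    (v := fun a : κ × n => (hτh a.1).eigenvectorBasis a.2)
    (fun a => mul_nonneg (hp a.1) ((hτ a.1).eigenvalues_nonneg a.2))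
    (fun a => (hτh a.1).eigenvectorBasis.norm_eq_one a.2) hquad
  rw [Fintype.sum_prod_type,
    sum_sum_negMulLog_mul_eq p fun k => (hτh k).sum_eigenvalues_eq_one (htr k)] at key
  rw [vNEntropy_eq_sum_negMulLog hmix]
  simp_rw [vNEntropy_eq_sum_negMulLog (hτh _), mul_div_assoc', ← Finset.sum_div, ← add_div]
  exact div_le_div_of_nonneg_right key (log_nonneg one_le_two)

theorem mul_sum_vNEntropy_le_vNEntropy_uniform_mix {ρ : κ → Matrix n n ℂ}
    (hρ : ∀ k, (ρ k).PosSemidef) :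
    1 / (Fintype.card κ : ℝ) * ∑ k, vNEntropy (ρ k) ≤
      vNEntropy (((1 / (Fintype.card κ : ℝ)) : ℂ) • ∑ k, ρ k) := by
  have h := sum_mul_vNEntropy_le_vNEntropy_sum (c := fun _ => 1 / (Fintype.card κ : ℝ))
    (fun _ => by positivity) (by simpa using mul_inv_le_one) hρ
  rwa [← Finset.mul_sum, ← Finset.smul_sum, Complex.ofReal_div, Complex.ofReal_one] at h

theorem vNEntropy_uniform_mix_le [Nonempty κ] {τ : κ → Matrix n n ℂ}
    (hτ : ∀ k, (τ k).PosSemidef) (htr : ∀ k, (τ k).trace = 1) :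
    vNEntropy (((1 / (Fintype.card κ : ℝ)) : ℂ) • ∑ k, τ k) ≤
      logb 2 (Fintype.card κ) + 1 / (Fintype.card κ : ℝ) * ∑ k, vNEntropy (τ k) := by
  set K := (Fintype.card κ : ℝ)
  have hK : K ≠ 0 := Nat.cast_ne_zero.2 Fintype.card_ne_zero
  have hunif : ∑ _k : κ, negMulLog (1 / K) = log K := by
    rw [Finset.sum_const, Finset.card_univ, nsmul_eq_mul, negMulLog, one_div, log_inv]
    change K * _ = _
    field_simp
  have h := vNEntropy_sum_smul_le (p := fun _ => 1 / K) (fun _ => by positivity) hτ htr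
  rwa [hunif, log_div_log, ← Finset.mul_sum, ← Finset.smul_sum, Complex.ofReal_div,
    Complex.ofReal_one] at h

end Entropy

theorem holevo_key_average_bound_general
    {𝒥 𝒦 : Type*} [Fintype 𝒥] [Fintype 𝒦] [Nonempty 𝒦] {D : ℕ}
    (P : 𝒥 → ℝ) (hP0 : ∀ j, 0 ≤ P j) (hP1 : ∑ j, P j = 1)
    (σ : 𝒥 → 𝒦 → Matrix (Fin D) (Fin D) ℂ) (hσ : ∀ j k, IsDensityOperator (σ j k)) :
    (1 / (Fintype.card 𝒦 : ℝ)) *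
        ∑ k : 𝒦, (vNEntropy (∑ j, (P j : ℂ) • σ j k) - ∑ j, P j * vNEntropy (σ j k)) -
      (vNEntropy (((1 / (Fintype.card 𝒦 : ℝ)) : ℂ) • ∑ j, ∑ k, (P j : ℂ) • σ j k) -
        ∑ j, P j * vNEntropy (((1 / (Fintype.card 𝒦 : ℝ)) : ℂ) • ∑ k, σ j k)) ≤
      Real.logb 2 (Fintype.card 𝒦 : ℝ) := by
  set K := (Fintype.card 𝒦 : ℝ)
  have hconc := mul_sum_vNEntropy_le_vNEntropy_uniform_mix fun k =>
    Matrix.posSemidef_sum_smul hP0 fun j => (hσ j k).1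
  rw [Finset.sum_comm] at hconc
  have hmix : ∑ j, P j * vNEntropy ((1 / (K : ℂ)) • ∑ k, σ j k) ≤
      Real.logb 2 K + ∑ j, P j * (1 / K * ∑ k, vNEntropy (σ j k)) :=
    calc _ ≤ ∑ j, P j * (Real.logb 2 K + 1 / K * ∑ k, vNEntropy (σ j k)) :=
          Finset.sum_le_sum fun j _ => mul_le_mul_of_nonneg_left
            (vNEntropy_uniform_mix_le (fun k => (hσ j k).1) fun k => (hσ j k).2) (hP0 j)
      _ = _ := by simp only [mul_add, Finset.sum_add_distrib, ← Finset.sum_mul, hP1, one_mul]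
  have hsplit : 1 / K * ∑ k, (vNEntropy (∑ j, (P j : ℂ) • σ j k) - ∑ j, P j * vNEntropy (σ j k)) =
      1 / K * ∑ k, vNEntropy (∑ j, (P j : ℂ) • σ j k) -
        ∑ j, P j * (1 / K * ∑ k, vNEntropy (σ j k)) := by
    rw [Finset.sum_sub_distrib, mul_sub, Finset.sum_comm]
    simp only [Finset.mul_sum, mul_left_comm]
  linarith

/-- **The averaged Holevo quantity exceeds the Holevo quantity of the averaged ensemble by
at most `log₂ |𝒦|`**: for density operators `σ(j,k)` and a probability distribution `P`
on `𝒥`,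
`(1/|𝒦|) ∑_k χ(P; σ(·,k)) − χ(P; (1/|𝒦|) ∑_k σ(·,k)) ≤ log₂ |𝒦|`. -/
theorem holevo_key_average_bound
    {𝒥 𝒦 : Type*} [Fintype 𝒥] [Nonempty 𝒥] [Fintype 𝒦] [Nonempty 𝒦] {D : ℕ}
    (P : 𝒥 → ℝ) (hP0 : ∀ j, 0 ≤ P j) (hP1 : ∑ j, P j = 1)
    (σ : 𝒥 → 𝒦 → Matrix (Fin D) (Fin D) ℂ) (hσ : ∀ j k, IsDensityOperator (σ j k)) :
    (1 / (Fintype.card 𝒦 : ℝ)) *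
        ∑ k : 𝒦, (vNEntropy (∑ j, (P j : ℂ) • σ j k) - ∑ j, P j * vNEntropy (σ j k)) -
      (vNEntropy (((1 / (Fintype.card 𝒦 : ℝ)) : ℂ) • ∑ j, ∑ k, (P j : ℂ) • σ j k) -
        ∑ j, P j * vNEntropy (((1 / (Fintype.card 𝒦 : ℝ)) : ℂ) • ∑ k, σ j k)) ≤
      Real.logb 2 (Fintype.card 𝒦 : ℝ) :=
  holevo_key_average_bound_general P hP0 hP1 σ hσ

end
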